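/- Let d₂, d₃ > 0 and R₀ > 1. Then the function λ ↦ λ² + (d₂+d₃)λ + d₂d₃(1 − R₀e^{−λτ}) has a positive real root for every τ ≥ 0. Consequently the characteristic equation λ² + (d₂+d₃)λ + d₂d₃(1 − R₀e^{−λτ}) = 0 admits a real root λ > 0. -/
import Mathlib


theorem disease_free_unstable_R0_gt_one
    (d₂ d₃ R₀ : ℝ) (hd₂ : 0 < d₂) (hd₃ : 0 < d₃) (hR₀ : 1 < R₀) :
    ∀ τ : ℝ, 0 ≤ τ → ∃ lam : ℝ, 0 < lam ∧
      lam^2 + (d₂ + d₃) * lam + d₂ * d₃ * (1 - R₀ * Real.exp (-lam * τ)) = 0 := by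
  intro τ hτ
  set f : ℝ → ℝ := fun x => x^2 + (d₂ + d₃) * x + d₂ * d₃ * (1 - R₀ * Real.exp (-x * τ)) with hf
  have hcont : Continuous f := by
    apply Continuous.add
    · fun_prop
    · fun_prop
  set M : ℝ := 1 + Real.sqrt (d₂ * d₃ * R₀) with hM
  have hs : 0 ≤ Real.sqrt (d₂ * d₃ * R₀) := Real.sqrt_nonneg _
  have hMpos : 0 < M := by positivity
  have hf0 : f 0 < 0 := by
    simp only [hf]
    have : Real.exp (-(0:ℝ) * τ) = 1 := by norm_num
    rw [this]
    nlinarith [mul_pos hd₂ hd₃]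
  have hfM : 0 < f M := by
    have hexp : Real.exp (-M * τ) ≤ 1 := by
      apply Real.exp_le_one_iff.mpr
      nlinarith
    have hsq : Real.sqrt (d₂ * d₃ * R₀) ^ 2 = d₂ * d₃ * R₀ := by
      rw [sq]
      exact Real.mul_self_sqrt (by positivity)
    have hM2 : d₂ * d₃ * R₀ < M ^ 2 := by
      simp only [hM]; nlinarith
    simp only [hf]
    have hR0pos : 0 < R₀ := by linarith
    have : d₂ * d₃ * (R₀ * Real.exp (-M * τ)) ≤ d₂ * d₃ * R₀ := by
      have := mul_le_of_le_one_right (le_of_lt hR0pos) hexp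
      nlinarith [mul_pos hd₂ hd₃]
    nlinarith [mul_pos hd₂ hd₃, mul_pos (mul_pos hd₂ hd₃) (add_pos hd₂ hd₃)]
  have hmem : (0:ℝ) ∈ Set.Ioo (f 0) (f M) := ⟨hf0, hfM⟩
  have hsub := intermediate_value_Ioo (le_of_lt hMpos) (hcont.continuousOn (s := Set.Icc 0 M))
  obtain ⟨c, hc, hfc⟩ := hsub hmem
  exact ⟨c, hc.1, hfc⟩
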